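/- Let G be a connected simple graph and suppose every cycle of G has length divisible by 3 when counted with signs along a fixed orientation (i.e., for the all-ones weighting on a fixed orientation, every cycle has effective length ≡ 0 mod 3). Then G is properly 3-colourable. -/

import Mathlib

open Classical

/-- The underlying simple graph of a digraph given by its set `E` of directed
edges (ordered pairs of distinct vertices). -/
def underlyingGraph {V : Type*} (E : Set (V × V)) : SimpleGraph V :=
  SimpleGraph.fromRel (fun u v => (u, v) ∈ E)

/-- The effective length of a walk in the underlying graph of a digraph with edge
set `E`, with edge weights `w` in an abelian group: forward edges count
positively, backward edges negatively. -/
noncomputable def effLen {V Γ : Type*} [AddCommGroup Γ] (E : Set (V × V)) (w : V × V → Γ)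
    {a b : V} (p : (underlyingGraph E).Walk a b) : Γ :=
  (p.darts.map (fun d =>
    if d.toProd ∈ E then w d.toProd else - w (d.toProd.2, d.toProd.1))).sum

/-!
Read the orientation as a weighting of darts by `±1` that changes sign under reversal. Every
closed walk shrinks to its bypass, a trivial path, by cutting off closed sub-walks of the form
"an edge followed by a path"; each of these is a cycle or an edge traversed back and forth, so
every closed walk has weight `0`. Hence the weight of a walk depends only on its endpoints, and the
weight from a fixed vertex of each component is a potential whose differences along edges are
`±1 ≠ 0` in `ZMod 3`: a proper colouring.
-/

namespace SimpleGraph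

variable {V Γ : Type*} [AddCommGroup Γ] {G : SimpleGraph V}

namespace Walk

variable (f : G.Dart → Γ)

def dartSum {u v : V} (p : G.Walk u v) : Γ :=
  (p.darts.map f).sum

@[simp]
theorem dartSum_nil {u : V} : (nil : G.Walk u u).dartSum f = 0 := rfl

@[simp]
theorem dartSum_cons {u v w : V} (h : G.Adj u v) (p : G.Walk v w) :
    (cons h p).dartSum f = f ⟨(u, v), h⟩ + p.dartSum f := by
  simp [dartSum]

@[simp]
theorem dartSum_append {u v w : V} (p : G.Walk u v) (q : G.Walk v w) :
    (p.append q).dartSum f = p.dartSum f + q.dartSum f := by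
  simp [dartSum]

@[simp]
theorem dartSum_concat {u v w : V} (p : G.Walk u v) (h : G.Adj v w) :
    (p.concat h).dartSum f = p.dartSum f + f ⟨(v, w), h⟩ := by
  simp [concat]

@[simp]
theorem dartSum_copy {u v u' v' : V} (p : G.Walk u v) (hu : u = u') (hv : v = v') :
    (p.copy hu hv).dartSum f = p.dartSum f := by
  simp [dartSum]

variable {f}

theorem dartSum_reverse (hf : ∀ d, f d.symm = -f d) {u v : V} (p : G.Walk u v) :
    p.reverse.dartSum f = -p.dartSum f := by
  induction p with
  | nil => simp
  | @cons u v w h p ih =>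
    rw [reverse_cons, dartSum_append, ih, dartSum_cons, dartSum_cons, dartSum_nil, add_zero,
      neg_add_rev, ← hf]
    rfl

section CycleCondition

variable (hf : ∀ d, f d.symm = -f d)
  (hcyc : ∀ (a : V) (c : G.Walk a a), c.IsCycle → c.dartSum f = 0)
include hf hcyc

theorem dartSum_cons_eq_zero_of_isPath {u v : V} (h : G.Adj u v) {q : G.Walk v u}
    (hq : q.IsPath) : (cons h q).dartSum f = 0 := by
  by_cases he : s(u, v) ∈ q.edges
  · rw [hq.eq_adj_toWalk_of_mem_edges (Sym2.eq_swap ▸ he)]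
    simp only [Adj.toWalk, dartSum_cons, dartSum_nil, add_zero]
    exact add_eq_zero_iff_eq_neg'.mpr (hf ⟨(u, v), h⟩)
  · exact hcyc _ _ ((cons_isCycle_iff q h).mpr ⟨hq, he⟩)

theorem dartSum_bypass [DecidableEq V] {u v : V} (p : G.Walk u v) :
    p.bypass.dartSum f = p.dartSum f := by
  induction p with
  | nil => rfl
  | @cons u v w h p ih =>
    rw [bypass]
    split_ifs with hs
    · have hloop := dartSum_cons_eq_zero_of_isPath hf hcyc h (p.bypass_isPath.takeUntil hs)
      rw [dartSum_cons] at hloop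
      rw [dartSum_cons, ← ih]
      conv_rhs => rw [← take_spec p.bypass hs, dartSum_append, ← add_assoc, hloop, zero_add]
    · rw [dartSum_cons, dartSum_cons, ih]

theorem dartSum_eq_zero {u : V} (p : G.Walk u u) : p.dartSum f = 0 := by
  classical
  rw [← dartSum_bypass hf hcyc, (isPath_iff_nil.mp p.bypass_isPath).eq_nil, dartSum_nil]

theorem dartSum_eq_dartSum {u v : V} (p q : G.Walk u v) : p.dartSum f = q.dartSum f := by
  have := dartSum_eq_zero hf hcyc (p.append q.reverse)
  rwa [dartSum_append, dartSum_reverse hf, add_neg_eq_zero] at this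

end CycleCondition

end Walk

theorem exists_forall_dart_eq_sub {f : G.Dart → Γ} (hf : ∀ d, f d.symm = -f d)
    (hcyc : ∀ (a : V) (c : G.Walk a a), c.IsCycle → c.dartSum f = 0) :
    ∃ c : V → Γ, ∀ d : G.Dart, f d = c d.snd - c d.fst := by
  let walkFromRep (v : V) : G.Walk (G.connectedComponentMk v).out v :=
    (ConnectedComponent.exact (G.connectedComponentMk v).out_eq).some
  refine ⟨fun v => (walkFromRep v).dartSum f, fun ⟨(u, v), h⟩ => ?_⟩
  have hrep : (G.connectedComponentMk v).out = (G.connectedComponentMk u).out := by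
    rw [ConnectedComponent.connectedComponentMk_eq_of_adj h]
  have := Walk.dartSum_eq_dartSum hf hcyc ((walkFromRep u).concat h)
    ((walkFromRep v).copy hrep rfl)
  rw [Walk.dartSum_concat, Walk.dartSum_copy] at this
  exact eq_sub_of_add_eq' this

end SimpleGraph

section Orientation

variable {V Γ : Type*} [AddCommGroup Γ]

noncomputable def orientedWeight (E : Set (V × V)) (w : V × V → Γ) :
    (underlyingGraph E).Dart → Γ :=
  fun d => if d.toProd ∈ E then w d.toProd else -w (d.toProd.2, d.toProd.1)

theorem effLen_eq_dartSum (E : Set (V × V)) (w : V × V → Γ) {a b : V}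
    (p : (underlyingGraph E).Walk a b) : effLen E w p = p.dartSum (orientedWeight E w) :=
  rfl

theorem orientedWeight_symm {E : Set (V × V)} (w : V × V → Γ)
    (hasym : ∀ p ∈ E, (p.2, p.1) ∉ E) (d : (underlyingGraph E).Dart) :
    orientedWeight E w d.symm = -orientedWeight E w d := by
  obtain ⟨⟨u, v⟩, h⟩ := d
  have huv : (u, v) ∈ E ∨ (v, u) ∈ E := ((SimpleGraph.fromRel_adj _ u v).mp h).2
  show (if (v, u) ∈ E then w (v, u) else -w (u, v)) =
    -(if (u, v) ∈ E then w (u, v) else -w (v, u))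
  rcases huv with huv | hvu
  · rw [if_pos huv, if_neg (hasym _ huv)]
  · rw [if_pos hvu, if_neg (hasym _ hvu), neg_neg]

theorem orientedWeight_one_ne_zero {E : Set (V × V)} (d : (underlyingGraph E).Dart) :
    orientedWeight E (fun _ => (1 : ZMod 3)) d ≠ 0 := by
  unfold orientedWeight
  split
  exacts [one_ne_zero, neg_ne_zero.mpr one_ne_zero]

end Orientation

theorem three_colourable_of_cycles_zero_mod_three_general {V : Type*}
    (E : Set (V × V))
    (hasym : ∀ p ∈ E, (p.2, p.1) ∉ E)
    (hcyc : ∀ (a : V) (p : (underlyingGraph E).Walk a a), p.IsCycle →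
      effLen E (fun _ => (1 : ZMod 3)) p = 0) :
    ∃ c : V → ZMod 3, ∀ u v, (underlyingGraph E).Adj u v → c u ≠ c v := by
  obtain ⟨c, hc⟩ := SimpleGraph.exists_forall_dart_eq_sub
    (orientedWeight_symm (fun _ => (1 : ZMod 3)) hasym)
    (by simpa only [effLen_eq_dartSum] using hcyc)
  refine ⟨c, fun u v h huv => orientedWeight_one_ne_zero ⟨(u, v), h⟩ ?_⟩
  rw [hc]
  exact sub_eq_zero_of_eq huv.symm

/-- If, for some fixed orientation of the edges of a connected simple graph, every
cycle has effective length `0 mod 3` with the all-ones weighting (number of forward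
edges minus number of backward edges is divisible by `3`), then the graph is
properly `3`-colourable. -/
theorem three_colourable_of_cycles_zero_mod_three {V : Type*}
    (E : Set (V × V)) (hirr : ∀ p ∈ E, p.1 ≠ p.2)
    (hasym : ∀ p ∈ E, (p.2, p.1) ∉ E)
    (hconn : (underlyingGraph E).Connected)
    (hcyc : ∀ (a : V) (p : (underlyingGraph E).Walk a a), p.IsCycle →
      effLen E (fun _ => (1 : ZMod 3)) p = 0) :
    ∃ c : V → ZMod 3, ∀ u v, (underlyingGraph E).Adj u v → c u ≠ c v :=
  three_colourable_of_cycles_zero_mod_three_general E hasym hcyc
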